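/- Define δ_r = 1 − (4(r+1) / (r(r+2)π)) · cot(π / (2(r+1))) for integers r ≥ 1. Then the sequence (δ_r) is strictly increasing: δ_r < δ_{r+1} for every integer r ≥ 1. -/

import Mathlib

/-!
On `(0, π/2]` one has `1/x - x/3 - x³/15 ≤ cot x ≤ 1/x - x/3`. Cleared of denominators, each
bound says that a combination of `sin` and `cos` is nonnegative; it vanishes at `0` and its
derivative is `x` times the previous member of a chain that ends in `x sin x ≥ 0`, resp.
`(x/5)(3 sin x + 7x cos x - x² sin x) ≥ 0`.

At `x = π/(2(r+1))` the upper bound gives `δ_r ≥ 1 - 8/π² - (8 - 2π²/3)/(π² r(r+2))` and the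
lower bound shows that `δ_r` exceeds this by at most `π²/(30 r(r+2)(r+1)²)`. The increase of the
main term from `r` to `r+1` beats this error; at `r = 1`, the tight case, because
`π⁴ + 50π² < 600`.
-/

noncomputable section

/-- The Sato–Tate exponent `δ_r = 1 - (4(r+1)/(r(r+2)π)) cot(π/(2(r+1)))`. -/
def deltaST (r : ℕ) : ℝ :=
  1 - (4 * ((r : ℝ) + 1) / ((r : ℝ) * ((r : ℝ) + 2) * Real.pi)) *
    Real.cot (Real.pi / (2 * ((r : ℝ) + 1)))

open Real Set

lemma nonneg_of_hasDerivAt_of_deriv_nonneg {f f' : ℝ → ℝ} {c x : ℝ}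
    (hf : ∀ y, HasDerivAt f (f' y) y) (h0 : f 0 = 0) (hf' : ∀ y ∈ Icc 0 c, 0 ≤ f' y)
    (hx : x ∈ Icc 0 c) : 0 ≤ f x :=
  h0 ▸ monotoneOn_of_hasDerivWithinAt_nonneg (convex_Icc 0 c)
    (fun y _ ↦ (hf y).continuousAt.continuousWithinAt) (fun y _ ↦ (hf y).hasDerivWithinAt)
    (fun y hy ↦ hf' y (interior_subset hy)) ⟨le_rfl, hx.1.trans hx.2⟩ hx hx.1

lemma cot_le_inv_sub {x : ℝ} (hx₀ : 0 < x) (hxπ : x < π) : cot x ≤ x⁻¹ - x / 3 := by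
  have h₁ : ∀ y ∈ Icc 0 π, 0 ≤ sin y - y * cos y := fun y hy ↦
    nonneg_of_hasDerivAt_of_deriv_nonneg (f := fun y ↦ sin y - y * cos y) (f' := fun y ↦ y * sin y)
      (fun y ↦ ((hasDerivAt_sin y).sub ((hasDerivAt_id' y).mul (hasDerivAt_cos y))).congr_deriv
        (by ring)) (by simp) (fun y hy ↦ mul_nonneg hy.1 (sin_nonneg_of_mem_Icc hy)) hy
  have h₂ : 0 ≤ (3 - x ^ 2) * sin x - 3 * x * cos x :=
    nonneg_of_hasDerivAt_of_deriv_nonneg (f := fun y ↦ (3 - y ^ 2) * sin y - 3 * y * cos y)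
      (f' := fun y ↦ y * (sin y - y * cos y))
      (fun y ↦ ((((hasDerivAt_pow 2 y).const_sub 3).mul (hasDerivAt_sin y)).sub
        (((hasDerivAt_id' y).const_mul 3).mul (hasDerivAt_cos y))).congr_deriv (by ring))
      (by simp) (fun y hy ↦ mul_nonneg hy.1 (h₁ y hy)) ⟨hx₀.le, hxπ.le⟩
  have hsin : 0 < sin x := sin_pos_of_pos_of_lt_pi hx₀ hxπ
  rw [cot_eq_cos_div_sin, div_le_iff₀ hsin]
  field_simp
  nlinarith

lemma inv_sub_sub_le_cot {x : ℝ} (hx₀ : 0 < x) (hx : x ≤ π / 2) :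
    x⁻¹ - x / 3 - x ^ 3 / 15 ≤ cot x := by
  have h₁ : ∀ y ∈ Icc 0 (π / 2),
      0 ≤ -sin y + y * cos y + 4 / 5 * y ^ 2 * sin y + 1 / 5 * y ^ 3 * cos y := fun y hy ↦
    nonneg_of_hasDerivAt_of_deriv_nonneg
      (f := fun y ↦ -sin y + y * cos y + 4 / 5 * y ^ 2 * sin y + 1 / 5 * y ^ 3 * cos y)
      (f' := fun y ↦ y / 5 * (3 * sin y + 7 * y * cos y - y ^ 2 * sin y))
      (fun y ↦ ((((hasDerivAt_sin y).neg.add ((hasDerivAt_id' y).mul (hasDerivAt_cos y))).add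
        (((hasDerivAt_pow 2 y).const_mul (4 / 5)).mul (hasDerivAt_sin y))).add
        (((hasDerivAt_pow 3 y).const_mul (1 / 5)).mul (hasDerivAt_cos y))).congr_deriv (by ring))
      (by simp) (fun y ⟨hy₀, hy⟩ ↦ by
        have hsin := sin_nonneg_of_nonneg_of_le_pi hy₀ (by linarith [pi_pos])
        have hcos := cos_nonneg_of_mem_Icc ⟨by linarith [pi_pos], hy⟩
        have hy3 : y ^ 2 ≤ 3 := by nlinarith [pi_lt_d2]
        have := mul_nonneg (sub_nonneg.2 hy3) hsin
        have := mul_nonneg hy₀ hcos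
        exact mul_nonneg (by linarith) (by nlinarith)) hy
  have h₂ : 0 ≤ 3 * x * cos x - (3 - x ^ 2 - x ^ 4 / 5) * sin x :=
    nonneg_of_hasDerivAt_of_deriv_nonneg
      (f := fun y ↦ 3 * y * cos y - (3 - y ^ 2 - y ^ 4 / 5) * sin y)
      (f' := fun y ↦ y * (-sin y + y * cos y + 4 / 5 * y ^ 2 * sin y + 1 / 5 * y ^ 3 * cos y))
      (fun y ↦ ((((hasDerivAt_id' y).const_mul 3).mul (hasDerivAt_cos y)).sub
        ((((hasDerivAt_pow 2 y).const_sub 3).sub ((hasDerivAt_pow 4 y).div_const 5)).mul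
          (hasDerivAt_sin y))).congr_deriv (by simp only [Pi.sub_apply]; ring))
      (by simp) (fun y hy ↦ mul_nonneg hy.1 (h₁ y hy)) ⟨hx₀.le, hx⟩
  have hsin : 0 < sin x := sin_pos_of_pos_of_lt_pi hx₀ (by linarith [pi_pos])
  rw [cot_eq_cos_div_sin, le_div_iff₀ hsin]
  field_simp
  nlinarith

def deltaSTLower (t : ℝ) : ℝ :=
  1 - 8 / π ^ 2 - (8 - 2 * π ^ 2 / 3) / (π ^ 2 * (t * (t + 2)))

def deltaSTUpper (t : ℝ) : ℝ :=
  deltaSTLower t + π ^ 2 / (30 * (t * (t + 2)) * (t + 1) ^ 2)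

lemma deltaSTLower_le {r : ℕ} (hr : 1 ≤ r) : deltaSTLower r ≤ deltaST r := by
  have hr' : (1 : ℝ) ≤ r := by exact_mod_cast hr
  have hx₀ : 0 < π / (2 * (r + 1)) := by positivity
  have hxπ : π / (2 * (r + 1)) < π := div_lt_self pi_pos (by linarith)
  calc deltaSTLower r
      = 1 - 4 * ((r : ℝ) + 1) / (r * (r + 2) * π) *
          ((π / (2 * (r + 1)))⁻¹ - π / (2 * (r + 1)) / 3) := by
        unfold deltaSTLower
        field_simp
        ring
    _ ≤ deltaST r := by
        unfold deltaST
        gcongr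
        exact cot_le_inv_sub hx₀ hxπ

lemma deltaST_le_deltaSTUpper {r : ℕ} (hr : 1 ≤ r) : deltaST r ≤ deltaSTUpper r := by
  have hr' : (1 : ℝ) ≤ r := by exact_mod_cast hr
  have hx₀ : 0 < π / (2 * (r + 1)) := by positivity
  have hx : π / (2 * (r + 1)) ≤ π / 2 := div_le_div_of_nonneg_left pi_pos.le two_pos (by linarith)
  calc deltaST r
      ≤ 1 - 4 * ((r : ℝ) + 1) / (r * (r + 2) * π) *
          ((π / (2 * (r + 1)))⁻¹ - π / (2 * (r + 1)) / 3 - (π / (2 * (r + 1))) ^ 3 / 15) := by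
        unfold deltaST
        gcongr
        exact inv_sub_sub_le_cot hx₀ hx
    _ = deltaSTUpper r := by
        unfold deltaSTUpper deltaSTLower
        field_simp
        ring

lemma pi_pow_four_mul_lt {t : ℝ} (ht : 1 ≤ t) :
    π ^ 4 * (t + 3) < (240 - 20 * π ^ 2) * (t + 1) * (2 * t + 3) := by
  have hs₀ : 0 < π ^ 2 := by positivity
  have hs : π ^ 2 < 9.93 := by nlinarith [pi_lt_d2, pi_pos]
  have ht₁ := sub_nonneg.2 ht
  have hs₁ := (sub_pos.2 hs).le
  nlinarith [mul_nonneg ht₁ hs₁, mul_nonneg (mul_nonneg ht₁ ht₁) hs₁, mul_nonneg hs₀.le hs₁,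
    mul_nonneg (mul_nonneg ht₁ hs₀.le) hs₁]

lemma deltaSTUpper_lt_deltaSTLower_add_one {t : ℝ} (ht : 1 ≤ t) :
    deltaSTUpper t < deltaSTLower (t + 1) := by
  have ht₀ : 0 < t := by linarith
  have hgap : deltaSTLower (t + 1) - deltaSTUpper t =
      ((240 - 20 * π ^ 2) * (t + 1) * (2 * t + 3) - π ^ 4 * (t + 3)) /
        (30 * π ^ 2 * t * (t + 2) * (t + 1) ^ 2 * (t + 3)) := by
    unfold deltaSTUpper deltaSTLower
    field_simp
    ring
  rw [← sub_pos, hgap]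
  exact div_pos (sub_pos.2 (pi_pow_four_mul_lt ht)) (by positivity)

theorem deltaST_strictMono (r : ℕ) (hr : 1 ≤ r) : deltaST r < deltaST (r + 1) :=
  calc deltaST r ≤ deltaSTUpper r := deltaST_le_deltaSTUpper hr
    _ < deltaSTLower (r + 1) := deltaSTUpper_lt_deltaSTLower_add_one (by exact_mod_cast hr)
    _ ≤ deltaST (r + 1) := mod_cast deltaSTLower_le (Nat.le_succ_of_le hr)
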